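/- There is a universal constant C > 0 such that for every n ≥ 3 the following holds. Let XOR_n : {0,1}^n → {0,1} be the parity function and let D be the distribution on {0,1}^n generated as follows: sample z uniformly from {0,1}^{n−2}, set a := XOR_{n−2}(z), sample a uniform bit b; with probability 1/100 output x := a a z (first two bits both equal a, followed by z), and with probability 99/100 output x := b b z. Then sel_{1/3}(XOR_n, D) ≥ n−2, while corr_{1/3}(XOR_n, D) ≤ C. -/

import Mathlib

open Finset

/-- A deterministic decision tree over alphabet `α`, querying positions `ι`,
with output labels `β`.  A `node i ch` queries position `i` and has one child per symbol. -/
inductive DTree (α ι β : Type) : Type where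
  | leaf : β → DTree α ι β
  | node : ι → (α → DTree α ι β) → DTree α ι β

namespace DTree

/-- The output of the tree on input `x`. -/
def eval {α ι β : Type} : DTree α ι β → (ι → α) → β
  | .leaf b, _ => b
  | .node i ch, x => (ch (x i)).eval x

/-- The depth of a tree: the maximum number of queries along any root-to-leaf path. -/
def depth {α ι β : Type} [Fintype α] : DTree α ι β → ℕ
  | .leaf _ => 0
  | .node _ ch => 1 + Finset.univ.sup fun a => (ch a).depth

/-- `Input(ℓ)` for the leaf `ℓ` reached by `x`: the set of inputs that follow
the same root-to-leaf path as `x`. -/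
def reach {α ι β : Type} : DTree α ι β → (ι → α) → Set (ι → α)
  | .leaf _, _ => Set.univ
  | .node i ch, x => {y | y i = x i} ∩ (ch (x i)).reach x

/-- For a tree on `k` samples, the set `ℓ_j ⊆ Σ^n` of strings consistent with the
queries made to the `j`-th sample on the path followed by input `x`. -/
def reachJ {α β : Type} {k n : ℕ} :
    DTree α (Fin k × Fin n) β → ((Fin k × Fin n) → α) → Fin k → Set (Fin n → α)
  | .leaf _, _, _ => Set.univ
  | .node p ch, x, j =>
      (if p.1 = j then {y : Fin n → α | y p.2 = x p} else Set.univ) ∩ (ch (x p)).reachJ x j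

end DTree

/-- Probability mass of a set `S` under (the mass function of) a distribution `D`. -/
noncomputable def prS {γ : Type} [Fintype γ] (D : γ → ℝ) (S : Set γ) : ℝ :=
  ∑ x, S.indicator D x

/-- `D` is a probability mass function on the finite type `γ`. -/
def IsDist {γ : Type} [Fintype γ] (D : γ → ℝ) : Prop :=
  (∀ x, 0 ≤ D x) ∧ ∑ x, D x = 1

/-- Likelihood ratio `LR(S) = D1(S)/D0(S)`. -/
noncomputable def LR {γ : Type} [Fintype γ] (D0 D1 : γ → ℝ) (S : Set γ) : ℝ :=
  prS D1 S / prS D0 S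

/-- The `k`-fold product distribution `D^k` on `k` samples (input flattened). -/
noncomputable def prodD {α : Type} {n k : ℕ} (D : (Fin n → α) → ℝ) :
    ((Fin k × Fin n) → α) → ℝ :=
  fun x => ∏ j, D fun i => x (j, i)

/-- `T` is a `(δ, M)`-likelihood booster for `D0, D1`. -/
def LBooster {α β : Type} [Fintype α] {n : ℕ}
    (D0 D1 : (Fin n → α) → ℝ) (δ M : ℝ) (T : DTree α (Fin n) β) : Prop :=
  1 - δ ≤ prS D1 {x | M ≤ LR D0 D1 (T.reach x)}

/-- `T` is a `(δ, M)`-overall likelihood booster for `D0^k, D1^k`. -/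
def OBooster {α β : Type} [Fintype α] {n k : ℕ}
    (D0 D1 : (Fin n → α) → ℝ) (δ M : ℝ) (T : DTree α (Fin k × Fin n) β) : Prop :=
  1 - δ ≤ prS (prodD D1) {x | M ≤ ∏ j, LR D0 D1 (T.reachJ x j)}

open scoped Classical in
/-- `T` is a `(δ, ε, M)`-uniform likelihood booster for `D0^k, D1^k`. -/
def UBooster {α β : Type} [Fintype α] {n k : ℕ}
    (D0 D1 : (Fin n → α) → ℝ) (δ ε M : ℝ) (T : DTree α (Fin k × Fin n) β) : Prop :=
  1 - δ ≤ prS (prodD D1)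
    {x | (1 - ε) * k ≤ ((Finset.univ.filter fun j => M ≤ LR D0 D1 (T.reachJ x j)).card : ℝ)}

/-- `D = ½D0 + ½D1` is a balanced input distribution for the partial function `f`:
`D_b` is a distribution supported on `f⁻¹(b)`. -/
def BalancedDist {n : ℕ} (f : (Fin n → Bool) → Option Bool) (D0 D1 : (Fin n → Bool) → ℝ) : Prop :=
  IsDist D0 ∧ IsDist D1 ∧ (∀ x, D0 x ≠ 0 → f x = some false) ∧ ∀ x, D1 x ≠ 0 → f x = some true

/-- `corr_ε(f, D)`: the minimum over `k ≥ 1` of the least depth of a deterministic decision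
tree on `k` samples which, for a uniformly random `b`, on input drawn from `D_b^k`
outputs `b` with probability at least `1 - ε`. -/
noncomputable def corrC {n : ℕ} (ε : ℝ) (D0 D1 : (Fin n → Bool) → ℝ) : ℕ :=
  sInf {q | ∃ k, 0 < k ∧ ∃ T : DTree Bool (Fin k × Fin n) Bool, T.depth ≤ q ∧
    1 - ε ≤ (prS (prodD D0) {x | T.eval x = false} + prS (prodD D1) {x | T.eval x = true}) / 2}

/-- `sel_ε(f, D)`: the minimum over `k ≥ 1` of the least depth of a deterministic decision
tree on `k` samples from `D` outputting a pair `(i, f(xⁱ))` with probability at least `1 - ε`. -/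
noncomputable def selC {n : ℕ} (ε : ℝ) (f : (Fin n → Bool) → Option Bool)
    (D : (Fin n → Bool) → ℝ) : ℕ :=
  sInf {q | ∃ k, 0 < k ∧ ∃ T : DTree Bool (Fin k × Fin n) (Fin k × Bool), T.depth ≤ q ∧
    1 - ε ≤ prS (prodD D) {x | f (fun i => x ((T.eval x).1, i)) = some (T.eval x).2}}

/-- The product distribution `D_{ab}^k = (Da × Db)^k` on `k` pairs of samples. -/
noncomputable def prodD2 {n k : ℕ} (Da Db : (Fin n → Bool) → ℝ) :
    ((Fin k × Fin 2 × Fin n) → Bool) → ℝ :=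
  fun x => ∏ j, (Da fun i => x (j, 0, i)) * Db fun i => x (j, 1, i)

/-- `bicorr_ε(f, D)`: minimum over `k ≥ 1` of the least depth of a deterministic decision tree
that distinguishes `D_{01}^k` (output `false`) from `D_{10}^k` (output `true`) with
probability at least `1 - ε` for a uniformly random choice between the two. -/
noncomputable def bicorrC {n : ℕ} (ε : ℝ) (D0 D1 : (Fin n → Bool) → ℝ) : ℕ :=
  sInf {q | ∃ k, 0 < k ∧ ∃ T : DTree Bool (Fin k × Fin 2 × Fin n) Bool, T.depth ≤ q ∧
    1 - ε ≤ (prS (prodD2 D0 D1) {x | T.eval x = false} +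
             prS (prodD2 D1 D0) {x | T.eval x = true}) / 2}

/-- `R_ε(f)`: randomized query complexity, i.e. the least `q` such that some probability
distribution over deterministic decision trees of depth at most `q` outputs `f x`
with probability at least `1 - ε` for every `x` in the domain of `f`. -/
noncomputable def Rq {ι : Type} (ε : ℝ) (f : (ι → Bool) → Option Bool) : ℕ :=
  sInf {q | ∃ (p : ℕ → ℝ) (Ts : ℕ → DTree Bool ι Bool),
    (∀ i, 0 ≤ p i) ∧ (∑' i, p i) = 1 ∧ (∀ i, (Ts i).depth ≤ q) ∧
    ∀ x b, f x = some b → 1 - ε ≤ ∑' i, if (Ts i).eval x = b then p i else 0}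

/-- `corr_ε(f)`: the maximum of `corr_ε(f, D)` over balanced input distributions `D` for `f`. -/
noncomputable def corrMax {n : ℕ} (ε : ℝ) (f : (Fin n → Bool) → Option Bool) : ℕ :=
  sSup {q | ∃ D0 D1, BalancedDist f D0 D1 ∧ q = corrC ε D0 D1}

/-- `sel_ε(f)`: the maximum of `sel_ε(f, D)` over balanced input distributions `D` for `f`. -/
noncomputable def selMax {n : ℕ} (ε : ℝ) (f : (Fin n → Bool) → Option Bool) : ℕ :=
  sSup {q | ∃ D0 D1, BalancedDist f D0 D1 ∧ q = selC ε f fun x => (D0 x + D1 x) / 2}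
/-- The parity (XOR) of all bits of `x`. -/
def XORn {n : ℕ} (x : Fin n → Bool) : Bool :=
  decide ((Finset.univ.filter fun i => x i = true).card % 2 = 1)

/-- The parity of the bits of `x` in positions `≥ 2`. -/
def XORtail {n : ℕ} (x : Fin n → Bool) : Bool :=
  decide ((Finset.univ.filter fun i : Fin n => 2 ≤ (i : ℕ) ∧ x i = true).card % 2 = 1)

/-- `x` with the bits in block `B` flipped. -/
def flipB {n : ℕ} (x : Fin n → Bool) (B : Finset (Fin n)) : Fin n → Bool :=
  fun i => if i ∈ B then !(x i) else x i

/-- `B` is a sensitive block of `f` on `x`: `x^B` lies in the domain of `f` and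
`f(x^B) ≠ f(x)`. -/
def SensBlock {n : ℕ} (f : (Fin n → Bool) → Option Bool) (x : Fin n → Bool)
    (B : Finset (Fin n)) : Prop :=
  (f (flipB x B)).isSome ∧ f (flipB x B) ≠ f x

/-- Fractional block sensitivity `fbs(f) = max_x fbs(f, x)`, where `fbs(f,x)` is the value
of the fractional packing LP over the sensitive blocks of `x`. -/
noncomputable def fbs {n : ℕ} (f : (Fin n → Bool) → Option Bool) : ℝ :=
  sSup {r | ∃ x, (f x).isSome ∧ ∃ w : Finset (Fin n) → ℝ,
    (∀ B, 0 ≤ w B) ∧ (∀ B, w B ≤ 1) ∧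
    (∀ B, w B ≠ 0 → SensBlock f x B) ∧
    (∀ i, ∑ B ∈ Finset.univ.filter (fun B => i ∈ B), w B ≤ 1) ∧
    r = ∑ B, w B}

/-- The composed partial function `f ∘ g`, defined on `(x¹, …, xⁿ)` when every `xⁱ` is in
the domain of `g`, with value `f(g(x¹), …, g(xⁿ))`. -/
def compFG {n m : ℕ} (f : (Fin n → Bool) → Option Bool) (g : (Fin m → Bool) → Option Bool) :
    ((Fin n × Fin m) → Bool) → Option Bool :=
  fun x =>
    if h : ∀ i, (g fun s => x (i, s)).isSome then
      f fun i => (g fun s => x (i, s)).get (h i)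
    else none

/-- Number of queries that `T` makes into block `B` on input `x` (each query reads one bit
`(i, s)`, and counts if `i ∈ B`). -/
def countQ {m n : ℕ} {β : Type} (B : Finset (Fin n)) :
    DTree Bool (Fin n × Fin m) β → ((Fin n × Fin m) → Bool) → ℕ
  | .leaf _, _ => 0
  | .node p ch, x => (if p.1 ∈ B then 1 else 0) + countQ B (ch (x p)) x

/-- The Shaltiel distribution for `XOR_n`, `n = m + 2`: with probability 99/100 output `0`
followed by `n-1` uniform bits; with probability 1/100 output `1`, one uniform bit, `0^{n-2}`. -/
noncomputable def D16 (m : ℕ) : (Fin (m + 2) → Bool) → ℝ := fun x =>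
  (if x 0 = false then (99 / 100) * ((1:ℝ) / 2) ^ (m + 1) else 0) +
  (if x 0 = true ∧ (∀ i : Fin (m + 2), 2 ≤ (i : ℕ) → x i = false) then 1 / 200 else 0)

/-- The distribution of Theorem 2 for `XOR_n`, `n = m + 3`: sample `z` uniform on `n-2` bits,
`a := XOR(z)`, `b` uniform; output `a a z` w.p. 1/100 and `b b z` w.p. 99/100. -/
noncomputable def D34 (m : ℕ) : (Fin (m + 3) → Bool) → ℝ := fun x =>
  if x 0 = x 1 then
    ((1:ℝ) / 2) ^ (m + 1) * (99 / 200 + if x 0 = XORtail x then 1 / 100 else 0)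
  else 0

/-- A distribution conditioned on `XORn x = b` (for distributions giving each value
probability 1/2). -/
noncomputable def condXOR {n : ℕ} (D : (Fin n → Bool) → ℝ) (b : Bool) : (Fin n → Bool) → ℝ :=
  fun x => if XORn x = b then 2 * D x else 0

/-!
Selection is hard: a tree of depth at most `n - 3` leaves unread one of the last `n - 2` bits of
the sample it answers about. Flipping that bit keeps the tree's output, flips the parity of the
sample and changes its probability by a factor at most `101/99`, so successes and failures pair
up and the success probability is at most `101/200`.

Correlated samples are easy: under `D_b` the first bit equals `b` with probability `101/200`, so
by Chebyshev's inequality the majority of the first bits of `10^5` samples is `b` with probability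
at least `9/10`.
-/

namespace DTree

variable {α ι β : Type}

def queries [DecidableEq ι] : DTree α ι β → (ι → α) → Finset ι
  | .leaf _, _ => ∅
  | .node i ch, x => insert i ((ch (x i)).queries x)

theorem card_queries_le_depth [DecidableEq ι] [Fintype α] (T : DTree α ι β) (x : ι → α) :
    (T.queries x).card ≤ T.depth := by
  induction T with
  | leaf => simp [queries, depth]
  | node i ch ih =>
    have hsup := Finset.le_sup (f := fun a => (ch a).depth) (mem_univ (x i))
    have hins := card_insert_le i ((ch (x i)).queries x)
    have hch := ih (x i)
    simp only [queries, depth]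
    omega

theorem eval_eq_and_queries_eq_of_eqOn [DecidableEq ι] (T : DTree α ι β) {x y : ι → α}
    (h : Set.EqOn y x (T.queries x)) : T.eval y = T.eval x ∧ T.queries y = T.queries x := by
  induction T with
  | leaf => exact ⟨rfl, rfl⟩
  | node i ch ih =>
    have hi : y i = x i := h (by simp [queries])
    obtain ⟨he, hq⟩ := ih (x i) fun j hj => h (by simp [queries, hj])
    simp only [eval, queries, hi, he, hq, and_self]

theorem exists_depth_le_eval_eq [Fintype α] [Inhabited α] [DecidableEq ι]
    {g : (ι → α) → β} (s : Finset ι) (hg : DependsOn g s) :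
    ∃ T : DTree α ι β, T.depth ≤ s.card ∧ T.eval = g := by
  induction s using Finset.induction_on generalizing g with
  | empty =>
    exact ⟨.leaf (g default), le_rfl, funext fun x => hg fun _ h => absurd h (notMem_empty _)⟩
  | insert i s hi ih =>
    have hgi (a : α) : DependsOn (fun y => g (Function.update y i a)) s := by
      intro y z hyz
      refine hg fun j hj => ?_
      by_cases hji : j = i
      · simp [hji]
      · simp [hji, hyz j (by simpa [hji] using hj)]
    choose T hTd hTe using fun a => ih (hgi a)
    refine ⟨.node i T, ?_, funext fun x => ?_⟩
    · have hsup := Finset.sup_le (s := univ) (f := fun a => (T a).depth) fun a _ => hTd a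
      simp only [depth, card_insert_of_notMem hi]
      omega
    · simp [eval, hTe]

variable [DecidableEq ι]

/-- `pos` sees only the output and the queried positions, so when it avoids the queries it picks
the same position on `x` and on the flipped input. -/
def flipUnqueried (T : DTree Bool ι β) (pos : β → Finset ι → ι) (x : ι → Bool) :
    ι → Bool :=
  Function.update x (pos (T.eval x) (T.queries x)) (!x (pos (T.eval x) (T.queries x)))

variable (T : DTree Bool ι β) (pos : β → Finset ι → ι)

theorem eval_flipUnqueried_and_queries
    (hpos : ∀ x, pos (T.eval x) (T.queries x) ∉ T.queries x) (x : ι → Bool) :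
    T.eval (T.flipUnqueried pos x) = T.eval x ∧
      T.queries (T.flipUnqueried pos x) = T.queries x :=
  T.eval_eq_and_queries_eq_of_eqOn fun _ hi =>
    Function.update_of_ne (ne_of_mem_of_not_mem hi (hpos x)) _ _

theorem flipUnqueried_involutive (hpos : ∀ x, pos (T.eval x) (T.queries x) ∉ T.queries x) :
    Function.Involutive (T.flipUnqueried pos) := by
  intro x
  obtain ⟨he, hq⟩ := T.eval_flipUnqueried_and_queries pos hpos x
  conv_lhs => rw [flipUnqueried, he, hq]
  simp [flipUnqueried]

end DTree

section Parity

theorem card_filter_update_not {ι : Type} [Fintype ι] [DecidableEq ι] (p : ι → Prop)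
    [DecidablePred p] (x : ι → Bool) {u : ι} (hu : p u) :
    (univ.filter fun i => p i ∧ Function.update x u (!x u) i = true).card + 1 =
        (univ.filter fun i => p i ∧ x i = true).card ∨
      (univ.filter fun i => p i ∧ Function.update x u (!x u) i = true).card =
        (univ.filter fun i => p i ∧ x i = true).card + 1 := by
  obtain hxu | hxu := Bool.eq_false_or_eq_true (x u)
  · left
    have : (univ.filter fun i => p i ∧ Function.update x u (!x u) i = true) =
        (univ.filter fun i => p i ∧ x i = true).erase u := by
      ext i; by_cases hi : i = u <;> simp [hi, hxu]
    rw [this, card_erase_add_one (by simp [hxu, hu])]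
  · right
    have : (univ.filter fun i => p i ∧ Function.update x u (!x u) i = true) =
        insert u (univ.filter fun i => p i ∧ x i = true) := by
      ext i; by_cases hi : i = u <;> simp [hi, hxu, hu]
    rw [this, card_insert_of_notMem (by simp [hxu])]

theorem decide_mod_two_eq_not {a b : ℕ} (h : a + 1 = b ∨ a = b + 1) :
    decide (a % 2 = 1) = !decide (b % 2 = 1) := by
  rw [← decide_not, decide_eq_decide]
  omega

theorem XORn_update_not {n : ℕ} (x : Fin n → Bool) (u : Fin n) :
    XORn (Function.update x u (!x u)) = !XORn x := by
  simpa [XORn] using decide_mod_two_eq_not (card_filter_update_not (fun _ => True) x trivial)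

theorem XORtail_update_not {n : ℕ} (x : Fin n → Bool) {u : Fin n} (hu : 2 ≤ (u : ℕ)) :
    XORtail (Function.update x u (!x u)) = !XORtail x :=
  decide_mod_two_eq_not (card_filter_update_not (fun i : Fin n => 2 ≤ (i : ℕ)) x hu)

theorem XORn_cons {n : ℕ} (a : Bool) (y : Fin n → Bool) :
    XORn (Fin.cons a y : Fin (n + 1) → Bool) = xor a (XORn y) := by
  unfold XORn
  rw [card_filter, card_filter, Fin.sum_univ_succ]
  cases a <;> simp [decide_mod_two_eq_not (a := 1 + _) (b := _) (Or.inr (add_comm _ _))]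

theorem XORtail_cons_cons {n : ℕ} (a c : Bool) (z : Fin (n + 1) → Bool) :
    XORtail (Fin.cons a (Fin.cons c z) : Fin (n + 3) → Bool) = XORn z := by
  unfold XORtail XORn
  rw [card_filter, card_filter, Fin.sum_univ_succ, Fin.sum_univ_succ]
  simp

end Parity

section Distributions

theorem prS_add_prS_compl {γ : Type} [Fintype γ] (D : γ → ℝ) (S : Set γ) :
    prS D S + prS D Sᶜ = ∑ x, D x := by
  simp only [prS, ← sum_add_distrib, Set.indicator_self_add_compl_apply]

theorem prS_univ {γ : Type} [Fintype γ] (D : γ → ℝ) : prS D Set.univ = ∑ x, D x := by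
  simp [prS]

theorem IsDist.pi {γ : Type} [Fintype γ] {q : γ → ℝ} (hq : IsDist q) (k : ℕ) :
    IsDist fun y : Fin k → γ => ∏ j, q (y j) :=
  ⟨fun _ => prod_nonneg fun j _ => hq.1 _, by rw [← Fintype.sum_pow, hq.2, one_pow]⟩

theorem IsDist.prodD {α : Type} [Fintype α] {n : ℕ} {D : (Fin n → α) → ℝ} (hD : IsDist D)
    (k : ℕ) : IsDist (prodD (k := k) D) := by
  refine ⟨fun _ => prod_nonneg fun j _ => hD.1 _, ?_⟩
  rw [← (Equiv.curry (Fin k) (Fin n) α).symm.sum_comp]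
  exact (hD.pi k).2

theorem sum_fin_cons {α : Type} [Fintype α] {n : ℕ} (F : (Fin (n + 1) → α) → ℝ) :
    ∑ x, F x = ∑ a, ∑ y, F (Fin.cons a y) :=
  ((Equiv.sum_comp (Fin.consEquiv fun _ => α) F).symm).trans (Fintype.sum_prod_type _)

theorem prodD_update_le {α : Type} {n k : ℕ} {D : (Fin n → α) → ℝ} (hD : ∀ w, 0 ≤ D w)
    {c : ℝ} (x : (Fin k × Fin n) → α) (i : Fin k) (u : Fin n) (v : α)
    (hDc : D (fun s => x (i, s)) ≤ c * D (Function.update (fun s => x (i, s)) u v)) :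
    prodD D x ≤ c * prodD D (Function.update x (i, u) v) := by
  classical
  have hrest : ∀ j ∈ univ.erase i,
      D (fun s => Function.update x (i, u) v (j, s)) = D (fun s => x (j, s)) := fun j hj => by
    congr 1
    exact Function.update_comp_eq_of_forall_ne _ _ fun s => by simp [ne_of_mem_erase hj]
  have hsample : (fun s => Function.update x (i, u) v (i, s)) =
      Function.update (fun s => x (i, s)) u v :=
    Function.update_comp_eq_of_injective x (Prod.mk_right_injective i) u v
  unfold prodD
  rw [← mul_prod_erase _ _ (mem_univ i), ← mul_prod_erase _ _ (mem_univ i),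
    prod_congr rfl hrest, hsample, ← mul_assoc]
  exact mul_le_mul_of_nonneg_right hDc (prod_nonneg fun j _ => hD _)

theorem prS_prodD_preimage {α δ : Type} [Fintype α] [Fintype δ] {n k : ℕ}
    (D : (Fin n → α) → ℝ) (h : (Fin n → α) → δ) (G : Set (Fin k → δ)) :
    prS (prodD D) {x | (fun j => h (fun s => x (j, s))) ∈ G} =
      prS (fun y : Fin k → δ => ∏ j, prS D {w | h w = y j}) G := by
  classical
  have hfib (y : Fin k → δ) : (if y ∈ G then ∏ j, prS D {w | h w = y j} else 0) =
      ∑ p : Fin k → Fin n → α,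
        if (fun j => h (p j)) = y then (if y ∈ G then ∏ j, D (p j) else 0) else 0 := by
    split_ifs with hy <;>
      simp [prS, Set.indicator_apply, Fintype.prod_sum, prod_ite_zero, funext_iff]
  calc prS (prodD D) {x | (fun j => h (fun s => x (j, s))) ∈ G}
      = ∑ p : Fin k → Fin n → α, if (fun j => h (p j)) ∈ G then ∏ j, D (p j) else 0 := by
        rw [prS, ← (Equiv.curry (Fin k) (Fin n) α).symm.sum_comp]
        simp only [Set.indicator_apply]
        rfl
    _ = ∑ y, ∑ p : Fin k → Fin n → α,
          if (fun j => h (p j)) = y then (if y ∈ G then ∏ j, D (p j) else 0) else 0 := by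
        rw [sum_comm]
        refine sum_congr rfl fun p _ => ?_
        exact (Fintype.sum_ite_eq (fun j => h (p j))
          fun y => if y ∈ G then ∏ j, D (p j) else 0).symm
    _ = _ := by
        rw [prS]
        simp only [Set.indicator_apply]
        exact sum_congr rfl fun y _ => (hfib y).symm

end Distributions

section Selection

/-- If `σ` moves `S` off itself while losing at most a factor `c` of mass, then
`W(S) ≤ c · W(σ S) ≤ c · (1 - W(S))`. -/
theorem one_add_mul_prS_le_of_perm {γ : Type} [Fintype γ] {W : γ → ℝ} (hW : IsDist W)
    {S : Set γ} (σ : Equiv.Perm γ) {c : ℝ} (hc : 0 ≤ c) (hσS : ∀ x ∈ S, σ x ∉ S)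
    (hσW : ∀ x ∈ S, W x ≤ c * W (σ x)) : (1 + c) * prS W S ≤ c := by
  have hpair : prS W S ≤ c * prS W Sᶜ := by
    rw [prS, prS, mul_sum, ← Equiv.sum_comp σ fun y => c * Sᶜ.indicator W y]
    refine sum_le_sum fun x _ => ?_
    by_cases hx : x ∈ S
    · rw [Set.indicator_of_mem hx, Set.indicator_of_mem (hσS x hx)]
      exact hσW x hx
    · rw [Set.indicator_of_notMem hx]
      exact mul_nonneg hc (Set.indicator_nonneg (fun y _ => hW.1 y) _)
  have htot := prS_add_prS_compl W S
  rw [hW.2] at htot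
  linear_combination hpair + c * htot

/-- A tree of depth below `|P|` leaves some position of `P` in its output sample unread; flipping
it flips `f` on that sample but keeps the output, pairing successes with failures. -/
theorem one_add_mul_prS_select_le {n k : ℕ} {D : (Fin n → Bool) → ℝ} (hD : IsDist D)
    {f : (Fin n → Bool) → Bool} {P : Finset (Fin n)} {c : ℝ} (hc : 0 ≤ c)
    (hf : ∀ x, ∀ u ∈ P, f (Function.update x u (!x u)) = !f x)
    (hDc : ∀ x, ∀ u ∈ P, D x ≤ c * D (Function.update x u (!x u)))
    (T : DTree Bool (Fin k × Fin n) (Fin k × Bool)) (hT : T.depth < P.card) :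
    (1 + c) * prS (prodD D) {x | f (fun s => x ((T.eval x).1, s)) = (T.eval x).2} ≤ c := by
  classical
  have hfree (i : Fin k) (Q : Finset (Fin k × Fin n)) :
      ∃ u, Q.card ≤ T.depth → u ∈ P ∧ (i, u) ∉ Q := by
    by_cases hQ : Q.card ≤ T.depth
    · obtain ⟨e, he, heQ⟩ := exists_mem_notMem_of_card_lt_card
        (s := Q) (t := P.map ⟨Prod.mk i, Prod.mk_right_injective i⟩) (by simp; omega)
      obtain ⟨u, hu, rfl⟩ := mem_map.mp he
      exact ⟨u, fun _ => ⟨hu, heQ⟩⟩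
    · obtain ⟨u, -⟩ := card_pos.mp (by omega : 0 < P.card)
      exact ⟨u, fun h => absurd h hQ⟩
  choose u hu using hfree
  let pos (o : Fin k × Bool) (Q : Finset (Fin k × Fin n)) : Fin k × Fin n := (o.1, u o.1 Q)
  have hpos x := hu (T.eval x).1 (T.queries x) (T.card_queries_le_depth x)
  have hσ := T.flipUnqueried_involutive pos fun x => (hpos x).2
  have heval x := (T.eval_flipUnqueried_and_queries pos (fun x => (hpos x).2) x).1
  have hsample x : (fun s => T.flipUnqueried pos x ((T.eval x).1, s)) =
      Function.update (fun s => x ((T.eval x).1, s)) (pos (T.eval x) (T.queries x)).2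
        (!x (pos (T.eval x) (T.queries x))) :=
    Function.update_comp_eq_of_injective x (Prod.mk_right_injective _) _ _
  refine one_add_mul_prS_le_of_perm (hD.prodD k) hσ.toPerm hc (fun x hx hσx => ?_) fun x _ => ?_
  · simp only [Set.mem_ofPred_eq, Function.Involutive.coe_toPerm, heval, hsample] at hx hσx
    rw [hf _ _ (hpos x).1, hx] at hσx
    simp at hσx
  · exact prodD_update_le hD.1 x _ _ _ (hDc _ _ (hpos x).1)

end Selection

section Majority

theorem sum_prod_mul_sq_sum_eq {γ : Type} [Fintype γ] {q a : γ → ℝ} (hq : ∑ t, q t = 1)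
    (hqa : ∑ t, q t * a t = 0) (k : ℕ) :
    ∑ y : Fin k → γ, (∏ j, q (y j)) * (∑ j, a (y j)) ^ 2 = k * ∑ t, q t * a t ^ 2 := by
  induction k with
  | zero => simp
  | succ k ih =>
    have hP : ∑ y : Fin k → γ, ∏ j, q (y j) = 1 := by rw [← Fintype.sum_pow, hq, one_pow]
    calc ∑ y : Fin (k + 1) → γ, (∏ j, q (y j)) * (∑ j, a (y j)) ^ 2
        = ∑ t, ∑ y : Fin k → γ, (q t * a t ^ 2 * ∏ j, q (y j) +
            2 * (q t * a t) * ((∏ j, q (y j)) * ∑ j, a (y j)) +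
            q t * ((∏ j, q (y j)) * (∑ j, a (y j)) ^ 2)) := by
          rw [sum_fin_cons]
          simp only [Fin.prod_univ_succ, Fin.sum_univ_succ, Fin.cons_zero, Fin.cons_succ]
          exact sum_congr rfl fun t _ => sum_congr rfl fun y _ => by ring
      _ = (∑ t, q t * a t ^ 2) * ∑ y : Fin k → γ, ∏ j, q (y j) +
            2 * (∑ t, q t * a t) * ∑ y : Fin k → γ, (∏ j, q (y j)) * ∑ j, a (y j) +
            (∑ t, q t) * ∑ y : Fin k → γ, (∏ j, q (y j)) * (∑ j, a (y j)) ^ 2 := by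
          simp only [sum_add_distrib, ← mul_sum, ← sum_mul]
      _ = (k + 1 : ℕ) * ∑ t, q t * a t ^ 2 := by
          rw [hP, hqa, hq, ih]
          push_cast
          ring

theorem two_mul_card_filter_le_of_decide_ne {k : ℕ} {b : Bool} (y : Fin k → Bool)
    (h : decide (k < 2 * (univ.filter fun j => y j = true).card) ≠ b) :
    2 * (univ.filter fun j => y j = b).card ≤ k := by
  have hsplit := card_filter_add_card_filter_not (s := univ) (p := fun j => y j = true)
  simp only [Bool.not_eq_true, card_univ, Fintype.card_fin] at hsplit
  cases b <;> simp at h <;> omega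

theorem isDist_bias (b : Bool) {β : ℝ} (hβ : |β| ≤ 1 / 2) :
    IsDist fun t : Bool => 1 / 2 + if t = b then β else -β := by
  rw [abs_le] at hβ
  refine ⟨fun t => by dsimp only; split_ifs <;> linarith, ?_⟩
  cases b <;> simp <;> ring

theorem sq_mul_prS_le_sum_mul_sq {γ : Type} [Fintype γ] {W : γ → ℝ} (hW : ∀ y, 0 ≤ W y)
    {A : γ → ℝ} {r : ℝ} {S : Set γ} (hS : ∀ y ∈ S, r ^ 2 ≤ A y ^ 2) :
    r ^ 2 * prS W S ≤ ∑ y, W y * A y ^ 2 := by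
  rw [prS, mul_sum]
  refine sum_le_sum fun y _ => ?_
  by_cases hy : y ∈ S
  · rw [Set.indicator_of_mem hy, mul_comm]
    exact mul_le_mul_of_nonneg_left (hS y hy) (hW y)
  · rw [Set.indicator_of_notMem hy, mul_zero]
    exact mul_nonneg (hW y) (sq_nonneg _)

/-- Chebyshev's inequality for the number of votes for `b` among `k` independent votes, each
for `b` with probability `1/2 + β`. -/
theorem four_mul_prS_majority_ne_le (k : ℕ) (b : Bool) {β : ℝ} (hβ0 : 0 ≤ β)
    (hβ1 : β ≤ 1 / 2) :
    4 * k * β ^ 2 * prS (fun y : Fin k → Bool => ∏ j, (1 / 2 + if y j = b then β else -β))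
      {y | decide (k < 2 * (univ.filter fun j => y j = true).card) ≠ b} ≤ 1 := by
  set q : Bool → ℝ := fun t => 1 / 2 + if t = b then β else -β
  set a : Bool → ℝ := fun t => (if t = b then 1 else 0) - (1 / 2 + β)
  have hq : IsDist q := isDist_bias b (abs_le.mpr ⟨by linarith, hβ1⟩)
  have hqa : ∑ t, q t * a t = 0 := by cases b <;> simp [q, a] <;> ring
  have hvar : ∑ t, q t * a t ^ 2 = 1 / 4 - β ^ 2 := by cases b <;> simp [q, a] <;> ring
  have hdev (y : Fin k → Bool)
      (hy : decide (k < 2 * (univ.filter fun j => y j = true).card) ≠ b) :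
      (k * β) ^ 2 ≤ (∑ j, a (y j)) ^ 2 := by
    have hcount : (2 * (univ.filter fun j => y j = b).card : ℕ) ≤ (k : ℝ) := by
      exact_mod_cast two_mul_card_filter_le_of_decide_ne y hy
    have hsum : ∑ j, a (y j) = (univ.filter fun j => y j = b).card - k * (1 / 2 + β) := by
      simp only [a, sum_sub_distrib, sum_const, card_univ, Fintype.card_fin, nsmul_eq_mul,
        natCast_card_filter]
    push_cast at hcount
    rw [hsum]
    nlinarith [mul_nonneg (Nat.cast_nonneg k : (0 : ℝ) ≤ k) hβ0]
  have hmarkov := (sq_mul_prS_le_sum_mul_sq (hq.pi k).1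
    (S := {y | decide (k < 2 * (univ.filter fun j => y j = true).card) ≠ b}) hdev).trans_eq
    (sum_prod_mul_sq_sum_eq hq.2 hqa k)
  rw [hvar] at hmarkov
  rcases Nat.eq_zero_or_pos k with rfl | hk
  · simp
  · have hk' : (0 : ℝ) < k := by exact_mod_cast hk
    refine le_of_mul_le_mul_left ?_ hk'
    nlinarith [sq_nonneg β]

end Majority

section D34

variable (m : ℕ)

theorem D34_nonneg (x : Fin (m + 3) → Bool) : 0 ≤ D34 m x := by
  unfold D34
  split_ifs <;> positivity

theorem D34_le_mul_update_not (x : Fin (m + 3) → Bool) {u : Fin (m + 3)} (hu : 2 ≤ (u : ℕ)) :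
    D34 m x ≤ 101 / 99 * D34 m (Function.update x u (!x u)) := by
  have h0 : (0 : Fin (m + 3)) ≠ u := fun h => by simp [← h] at hu
  have h1 : (1 : Fin (m + 3)) ≠ u := fun h => by simp [← h] at hu
  unfold D34
  rw [Function.update_of_ne h0, Function.update_of_ne h1, XORtail_update_not x hu]
  split_ifs <;> simp_all <;> linarith [show (0 : ℝ) < (2 ^ (m + 1))⁻¹ by positivity]

theorem condXOR_D34_cons (b a c : Bool) (z : Fin (m + 1) → Bool) :
    condXOR (D34 m) b (Fin.cons a (Fin.cons c z)) =
      if a = c ∧ XORn z = b then (1 / 2) ^ m * (1 / 2 + if a = b then 1 / 200 else -(1 / 200))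
      else 0 := by
  unfold condXOR D34
  rw [XORn_cons, XORn_cons, XORtail_cons_cons]
  cases a <;> cases c <;> cases b <;> cases XORn z <;> norm_num [pow_succ] <;> ring

theorem sum_ite_XORn_eq (b : Bool) (r : ℝ) :
    ∑ z : Fin (m + 1) → Bool, (if XORn z = b then r else 0) = 2 ^ m * r := by
  have (v : Bool) : ∑ a : Bool, (if xor a v = b then r else 0) = r := by
    cases v <;> cases b <;> simp
  rw [sum_fin_cons, sum_comm]
  simp only [XORn_cons, this, sum_const, card_univ, Fintype.card_fun, Fintype.card_bool,
    Fintype.card_fin, nsmul_eq_mul]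
  push_cast; ring

theorem prS_condXOR_D34_fst (b t : Bool) :
    prS (condXOR (D34 m) b) {w | w 0 = t} = 1 / 2 + if t = b then 1 / 200 else -(1 / 200) := by
  simp only [prS, Set.indicator_apply, Set.mem_ofPred_eq]
  rw [sum_fin_cons]
  simp only [sum_fin_cons (n := m + 1), Fin.cons_zero, condXOR_D34_cons, ite_and,
    sum_ite_irrel, sum_const_zero, Fintype.sum_ite_eq', Fintype.sum_ite_eq, sum_ite_XORn_eq]
  rw [← mul_assoc, ← mul_pow]
  norm_num

theorem isDist_condXOR_D34 (b : Bool) : IsDist (condXOR (D34 m) b) := by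
  refine ⟨fun x => ?_, ?_⟩
  · unfold condXOR
    split_ifs
    · linarith [D34_nonneg m x]
    · exact le_rfl
  · have h := prS_add_prS_compl (condXOR (D34 m) b) {w | w 0 = true}
    simp only [Set.compl_ofPred, Bool.not_eq_true, prS_condXOR_D34_fst] at h
    rw [← h]
    cases b <;> norm_num

theorem condXOR_false_add_condXOR_true {n : ℕ} (D : (Fin n → Bool) → ℝ)
    (x : Fin n → Bool) :
    condXOR D false x + condXOR D true x = 2 * D x := by
  unfold condXOR
  cases XORn x <;> simp

theorem isDist_D34 : IsDist (D34 m) := by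
  refine ⟨D34_nonneg m, ?_⟩
  have h : ∑ x, (condXOR (D34 m) false x + condXOR (D34 m) true x) = ∑ x, 2 * D34 m x :=
    sum_congr rfl fun x _ => condXOR_false_add_condXOR_true (D34 m) x
  rw [sum_add_distrib, (isDist_condXOR_D34 m _).2, (isDist_condXOR_D34 m _).2, ← mul_sum] at h
  linarith

theorem card_filter_two_le : (univ.filter fun s : Fin (m + 3) => 2 ≤ (s : ℕ)).card = m + 1 := by
  rw [card_filter, Fin.sum_univ_succ, Fin.sum_univ_succ]
  simp

theorem le_selC_D34 : m + 1 ≤ selC (1 / 3) (fun x => some (XORn x)) (D34 m) := by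
  obtain ⟨T₀, -, hT₀⟩ := DTree.exists_depth_le_eval_eq (α := Bool) (β := Fin 1 × Bool)
    (univ : Finset (Fin 1 × Fin (m + 3))) (g := fun x => (0, XORn fun s => x (0, s)))
    (by simpa using dependsOn_univ _)
  refine le_csInf ⟨T₀.depth, 1, one_pos, T₀, le_rfl, ?_⟩ fun q ⟨k, _, T, hTq, hT⟩ => ?_
  · simp [hT₀, prS_univ, ((isDist_D34 m).prodD 1).2]
  · by_contra! hq
    have := one_add_mul_prS_select_le (isDist_D34 m) (by norm_num : (0 : ℝ) ≤ 101 / 99)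
      (fun x u _ => XORn_update_not x u)
      (fun x u hu => D34_le_mul_update_not m x (mem_filter.mp hu).2) T
      (by rw [card_filter_two_le]; omega)
    simp only [Option.some_inj] at hT
    linarith

theorem nine_div_ten_le_prS_majority_fst (b : Bool) :
    9 / 10 ≤ prS (prodD (condXOR (D34 m) b))
      {x : Fin 100000 × Fin (m + 3) → Bool |
        decide (100000 < 2 * (univ.filter fun j => x (j, 0) = true).card) = b} := by
  let G : Set (Fin 100000 → Bool) :=
    {y | decide (100000 < 2 * (univ.filter fun j => y j = true).card) = b}
  have hmarg := prS_prodD_preimage (condXOR (D34 m) b) (fun w => w 0) G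
  simp only [prS_condXOR_D34_fst] at hmarg
  have hsplit := (prS_add_prS_compl _ G).trans
    ((isDist_bias b (β := 1 / 200) (by norm_num [abs_le])).pi 100000).2
  have herr := four_mul_prS_majority_ne_le 100000 b (β := 1 / 200) (by norm_num) (by norm_num)
  change _ * prS _ Gᶜ ≤ 1 at herr
  change 9 / 10 ≤ prS (prodD (condXOR (D34 m) b)) {x | (fun j => x (j, 0)) ∈ G}
  rw [hmarg]
  norm_num at herr
  linarith

theorem corrC_D34_le : corrC (1 / 3) (condXOR (D34 m) false) (condXOR (D34 m) true) ≤ 100000 := by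
  obtain ⟨T, hTd, hT⟩ := DTree.exists_depth_le_eval_eq (α := Bool)
    (univ.image fun j : Fin 100000 => (j, (0 : Fin (m + 3))))
    (g := fun x => decide (100000 < 2 * (univ.filter fun j => x (j, 0) = true).card))
    fun x y hxy => by
      have hfst : ∀ j, x (j, 0) = y (j, 0) := fun j => hxy _ (by simp)
      simp only [hfst]
  refine Nat.sInf_le ⟨100000, by norm_num, T, hTd.trans (card_image_le.trans (by simp)), ?_⟩
  simp only [hT]
  linarith [nine_div_ten_le_prS_majority_fst m false, nine_div_ten_le_prS_majority_fst m true]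

end D34

/-- For the Shaltiel-type distribution `D34 m` on `n = m + 3 ≥ 3` bits
(sample `z` uniform on `n−2` bits, `a := XOR(z)`, `b` uniform; output `a a z` w.p. 1/100,
`b b z` w.p. 99/100): `sel_{1/3}(XOR_n, D) ≥ n − 2` while `corr_{1/3}(XOR_n, D) ≤ C`. -/
theorem sel_hard_corr_easy :
    ∃ C : ℕ, 0 < C ∧
      ∀ m : ℕ,
        m + 1 ≤ selC (1/3) (fun x => some (XORn x)) (D34 m) ∧
        corrC (1/3) (condXOR (D34 m) false) (condXOR (D34 m) true) ≤ C :=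
  ⟨100000, by norm_num, fun m => ⟨le_selC_D34 m, corrC_D34_le m⟩⟩
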